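/- arXiv:2305.01784 — 7 statements merged into one kernel-verified Lean document; each statement's English description precedes it below -/
import Mathlib

section
/- For every natural number k ≥ 4, (3·2^k + 2k + 12)^2 < 2k^2 + 23k + 9·2^(2k+1) + 2^(k-1)·(9k + 70) + 26. -/
theorem stmt_0 (k : ℕ) (hk : 4 ≤ k) :
    (3 * 2 ^ k + 2 * k + 12) ^ 2 <
      2 * k ^ 2 + 23 * k + 9 * 2 ^ (2 * k + 1) + 2 ^ (k - 1) * (9 * k + 70) + 26 := by
  obtain ⟨m, rfl⟩ := Nat.exists_eq_add_of_le hk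
  have h1 : 4 + m - 1 = 3 + m := by omega
  have h2 : 2 * (4 + m) + 1 = 9 + (m + m) := by omega
  rw [h1, h2]
  have ht : m + 1 ≤ 2 ^ m := Nat.lt_two_pow_self (n := m)
  have e1 : 2 ^ (4 + m) = 16 * 2 ^ m := by rw [pow_add]; ring
  have e2 : 2 ^ (3 + m) = 8 * 2 ^ m := by rw [pow_add]; ring
  have e3 : 2 ^ (9 + (m + m)) = 512 * (2 ^ m * 2 ^ m) := by
    rw [pow_add, pow_add]; ring
  rw [e1, e2, e3]
  nlinarith [ht, sq_nonneg (2 ^ m), Nat.one_le_two_pow (n := m)]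
end

section
/- For every natural number k ≥ 3, 2·(2k + 2^k + 2^(k+2) + 19)^2 < 4k^2 + 15k·2^k + 74k + 91·2^(k+1) + 13·2^(2k+3) + 142. -/
theorem stmt_2 (k : ℕ) (hk : 3 ≤ k) :
    2 * (2 * k + 2 ^ k + 2 ^ (k + 2) + 19) ^ 2 <
      4 * k ^ 2 + 15 * k * 2 ^ k + 74 * k + 91 * 2 ^ (k + 1) + 13 * 2 ^ (2 * k + 3) + 142 := by
  have h1 : 2 ^ (k + 2) = 4 * 2 ^ k := by ring
  have h2 : 2 ^ (k + 1) = 2 * 2 ^ k := by ring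
  have h3 : 2 ^ (2 * k + 3) = 8 * 2 ^ k * 2 ^ k := by rw [pow_add, two_mul, pow_add]; ring
  have h4 : 2 * k ≤ 2 ^ k := by
    clear h1 h2 h3 hk
    induction k with
    | zero => simp
    | succ n ih =>
      rcases Nat.lt_or_ge n 2 with h | h
      · interval_cases n <;> norm_num
      · rw [pow_succ]; omega
  have h5 : 8 ≤ 2 ^ k := by calc 8 = 2 ^ 3 := rfl
                                 _ ≤ 2 ^ k := Nat.pow_le_pow_right (by norm_num) hk
  nlinarith [sq_nonneg (2 ^ k - 2 * k), sq_nonneg (2 ^ k)]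
end

section
/- For every natural number k ≥ 4, 2·(2k + 9·2^k + 20)^2 < k·(4k + 27·2^k + 78) + 13·4^(k+2) + 21·2^(k+4) + 180. -/
theorem stmt_3 (k : ℕ) (hk : 4 ≤ k) :
    2 * (2 * k + 9 * 2 ^ k + 20) ^ 2 <
      k * (4 * k + 27 * 2 ^ k + 78) + 13 * 4 ^ (k + 2) + 21 * 2 ^ (k + 4) + 180 := by
  obtain ⟨m, rfl⟩ := Nat.exists_eq_add_of_le hk
  have ht : m + 1 ≤ 2 ^ m := Nat.lt_two_pow_self (n := m)
  have h4 : (4 : ℕ) ^ m = 2 ^ m * 2 ^ m := by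
    rw [show (4 : ℕ) = 2 * 2 from rfl, mul_pow]
  simp only [pow_add, pow_succ, h4]
  nlinarith [sq_nonneg (2 ^ m), Nat.one_le_two_pow (n := m), sq_nonneg m,
    Nat.mul_le_mul ht ht, Nat.mul_le_mul_right (2 ^ m) ht]
end

section
/- For every natural number k ≥ 4, (2k + 2^(k+1) + 17)^2 < 2k^2 + 33k + 13·4^k + 2^k·(3k + 34) + 36. -/
lemma sq_le_two_pow (k : ℕ) (hk : 4 ≤ k) : k ^ 2 ≤ 2 ^ k := by
  induction k with
  | zero => simp
  | succ n ih =>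
    rcases Nat.lt_or_ge n 4 with h | h
    · interval_cases n <;> simp_all
    · have := ih h
      have h2 : 2 * n + 1 ≤ 2 ^ n := by nlinarith
      ring_nf
      nlinarith [pow_succ 2 n]

theorem stmt_4 (k : ℕ) (hk : 4 ≤ k) :
    (2 * k + 2 ^ (k + 1) + 17) ^ 2 <
      2 * k ^ 2 + 33 * k + 13 * 4 ^ k + 2 ^ k * (3 * k + 34) + 36 := by
  have h1 : k ^ 2 ≤ 2 ^ k := sq_le_two_pow k hk
  have h2 : (16 : ℕ) ≤ 2 ^ k := by
    calc (16:ℕ) = 2 ^ 4 := by norm_num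
    _ ≤ 2 ^ k := Nat.pow_le_pow_right (by norm_num) hk
  have h3 : 4 * k ≤ 2 ^ k := by nlinarith
  have h4 : (4 : ℕ) ^ k = 2 ^ k * 2 ^ k := by
    rw [show (4:ℕ) = 2 * 2 from rfl, Nat.mul_pow]
  have h5 : (2:ℕ) ^ (k + 1) = 2 * 2 ^ k := by rw [pow_succ]; ring
  rw [h4, h5]
  nlinarith [Nat.mul_le_mul h3 h3, Nat.mul_le_mul h3 h2, Nat.mul_le_mul h2 h2]
end

section
/- For every integer k ≥ 4, the product of polynomials A·B·C + x·(2x+1)^{2k+4}, where A = (2x+1)^{k+1} + x(x+1)^{k+1}, B = (2x+1)^k + x(x+1)^k, and C = (2x+1)^3 + x(x+1)^3, has degree 2k+7 with leading coefficient 1, coefficient of x^{2k+6} equal to 3·2^k + 2k + 12, and coefficient of x^{2k+5} equal to 2k^2 + 23k + 9·2^{2k+1} + 2^{k-1}(9k+70) + 26. -/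
open Polynomial Finset

lemma coeff_two_X_add_one_pow (n j : ℕ) :
    ((2 * X + 1 : Polynomial ℤ) ^ n).coeff j = n.choose j * 2 ^ j := by
  induction n generalizing j with
  | zero =>
    cases j <;> simp [coeff_one]
  | succ n ih =>
    have h2 : ∀ q : Polynomial ℤ, ((2 : Polynomial ℤ) * q).coeff j = 2 * q.coeff j := by
      intro q
      rw [show (2 : Polynomial ℤ) = C 2 by norm_num, coeff_C_mul]
    rw [pow_succ, mul_add, mul_one, coeff_add, show (2*X+1:Polynomial ℤ)^n * (2*X) = 2 * ((2*X+1)^n * X) by ring, h2]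
    cases j with
    | zero => simp [ih]
    | succ j =>
      rw [coeff_mul_X, ih, ih, Nat.choose_succ_succ]
      push_cast
      ring

lemma mc0 (p q : Polynomial ℤ) {a b : ℕ} (hp : p.natDegree ≤ a) (hq : q.natDegree ≤ b) :
    (p * q).coeff (a + b) = p.coeff a * q.coeff b := by
  rw [coeff_mul, Finset.Nat.sum_antidiagonal_eq_sum_range_succ_mk]
  rw [Finset.sum_eq_single a]
  · simp
  · intro i hi hne
    rcases lt_or_gt_of_ne hne with h | h
    · rw [coeff_eq_zero_of_natDegree_lt (hq.trans_lt (by omega)), mul_zero]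
    · rw [coeff_eq_zero_of_natDegree_lt (hp.trans_lt h), zero_mul]
  · intro h
    exact absurd (Finset.mem_range.2 (by omega)) h

lemma mc1 (p q : Polynomial ℤ) {a b : ℕ} (hp : p.natDegree ≤ a + 1) (hq : q.natDegree ≤ b + 1) :
    (p * q).coeff (a + b + 2) = p.coeff (a + 1) * q.coeff (b + 1) := by
  have := mc0 p q hp hq
  rwa [show a + 1 + (b + 1) = a + b + 2 by omega] at this

lemma mcS1 (p q : Polynomial ℤ) {a b : ℕ} (hp : p.natDegree ≤ a + 1) (hq : q.natDegree ≤ b + 1) :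
    (p * q).coeff (a + b + 1) = p.coeff (a + 1) * q.coeff b + p.coeff a * q.coeff (b + 1) := by
  rw [coeff_mul, Finset.Nat.sum_antidiagonal_eq_sum_range_succ_mk]
  have hsub : ({a, a + 1} : Finset ℕ) ⊆ Finset.range (a + b + 1 + 1) := by
    intro x hx; simp at hx; simp; omega
  rw [← Finset.sum_subset hsub]
  · rw [Finset.sum_pair (by omega : a ≠ a + 1)]
    have : a + b + 1 - a = b + 1 := by omega
    rw [this, show a + b + 1 - (a + 1) = b by omega]
    ring
  · intro x _ hx
    simp only [Finset.mem_insert, Finset.mem_singleton, not_or] at hx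
    rcases lt_or_gt_of_ne hx.1 with h | h
    · rw [coeff_eq_zero_of_natDegree_lt (hq.trans_lt (by omega)), mul_zero]
    · rw [coeff_eq_zero_of_natDegree_lt (hp.trans_lt (by omega)), zero_mul]

lemma mcS2 (p q : Polynomial ℤ) {a b : ℕ} (hp : p.natDegree ≤ a + 2) (hq : q.natDegree ≤ b + 2) :
    (p * q).coeff (a + b + 2) =
      p.coeff (a + 2) * q.coeff b + p.coeff (a + 1) * q.coeff (b + 1) + p.coeff a * q.coeff (b + 2) := by
  rw [coeff_mul, Finset.Nat.sum_antidiagonal_eq_sum_range_succ_mk]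
  have hsub : ({a, a + 1, a + 2} : Finset ℕ) ⊆ Finset.range (a + b + 2 + 1) := by
    intro x hx; simp at hx; simp; omega
  rw [← Finset.sum_subset hsub]
  · rw [Finset.sum_insert (by simp), Finset.sum_pair (by omega : a + 1 ≠ a + 2)]
    rw [show a + b + 2 - a = b + 2 by omega, show a + b + 2 - (a + 1) = b + 1 by omega,
      show a + b + 2 - (a + 2) = b by omega]
    ring
  · intro x _ hx
    simp only [Finset.mem_insert, Finset.mem_singleton, not_or] at hx
    rcases lt_or_gt_of_ne hx.1 with h | h
    · rw [coeff_eq_zero_of_natDegree_lt (hq.trans_lt (by omega)), mul_zero]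
    · rw [coeff_eq_zero_of_natDegree_lt (hp.trans_lt (by omega)), zero_mul]

lemma coeff_X_mul_pow (p : Polynomial ℤ) (j : ℕ) : ((X : Polynomial ℤ) * p).coeff (j+1) = p.coeff j :=
  coeff_X_mul p j

lemma choose_two' (n : ℕ) : 2 * (((n+1).choose 2 : ℕ) : ℤ) = (n+1) * n := by
  induction n with
  | zero => decide
  | succ n ih =>
    rw [Nat.choose_succ_succ, Nat.cast_add, Nat.choose_one_right]
    push_cast at ih ⊢
    linear_combination ih

theorem stmt_16 (k : ℕ) (hk : 4 ≤ k) :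
    let P : Polynomial ℤ :=
      ((2 * X + 1) ^ (k + 1) + X * (X + 1) ^ (k + 1)) *
        ((2 * X + 1) ^ k + X * (X + 1) ^ k) *
        ((2 * X + 1) ^ 3 + X * (X + 1) ^ 3) + X * (2 * X + 1) ^ (2 * k + 4)
    P.natDegree = 2 * k + 7 ∧
    P.coeff (2 * k + 7) = 1 ∧
    P.coeff (2 * k + 6) = 3 * 2 ^ k + 2 * k + 12 ∧
    P.coeff (2 * k + 5) =
      2 * k ^ 2 + 23 * k + 9 * 2 ^ (2 * k + 1) + 2 ^ (k - 1) * (9 * k + 70) + 26 := by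
  obtain ⟨m, rfl⟩ : ∃ m, k = m + 4 := ⟨k - 4, by omega⟩
  intro P
  set A : Polynomial ℤ := (2 * X + 1) ^ (m + 4 + 1) + X * (X + 1) ^ (m + 4 + 1) with hAdef
  set B : Polynomial ℤ := (2 * X + 1) ^ (m + 4) + X * (X + 1) ^ (m + 4) with hBdef
  set Cp : Polynomial ℤ := (2 * X + 1) ^ 3 + X * (X + 1) ^ 3 with hCdef
  set T : Polynomial ℤ := X * (2 * X + 1) ^ (2 * (m + 4) + 4) with hTdef
  have hP : P = A * B * Cp + T := rfl
  -- degree bounds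
  have hdA : A.natDegree ≤ m + 6 := by
    rw [hAdef]; compute_degree <;> omega
  have hdB : B.natDegree ≤ m + 5 := by
    rw [hBdef]; compute_degree <;> omega
  have hdC : Cp.natDegree ≤ 4 := by
    rw [hCdef]; compute_degree
  have hdAB : (A * B).natDegree ≤ 2 * m + 11 :=
    natDegree_mul_le.trans (by omega)
  -- coefficients of A
  have hA0 : A.coeff (m + 6) = 1 := by
    rw [hAdef, coeff_add, coeff_two_X_add_one_pow,
      show m + 6 = (m + 5) + 1 from rfl, coeff_X_mul_pow, coeff_X_add_one_pow,
      Nat.choose_self, Nat.choose_eq_zero_of_lt (by omega)]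
    norm_num
  have hA1 : A.coeff (m + 5) = 2 ^ (m + 5) + (m + 5) := by
    rw [hAdef, coeff_add, coeff_two_X_add_one_pow,
      show m + 5 = (m + 4) + 1 from rfl, coeff_X_mul_pow, coeff_X_add_one_pow,
      Nat.choose_self, Nat.choose_succ_self_right]
    push_cast; ring
  have hA2 : A.coeff (m + 4) = (m + 5) * 2 ^ (m + 4) + ((m + 5).choose 2 : ℤ) := by
    rw [hAdef, coeff_add, coeff_two_X_add_one_pow,
      show m + 4 = (m + 3) + 1 from rfl, coeff_X_mul_pow, coeff_X_add_one_pow,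
      show m + 3 + 1 = m + 4 from rfl, Nat.choose_succ_self_right,
      show m + 3 = (m + 5) - 2 by omega, Nat.choose_symm (by omega)]
    push_cast; ring
  -- coefficients of B
  have hB0 : B.coeff (m + 5) = 1 := by
    rw [hBdef, coeff_add, coeff_two_X_add_one_pow,
      show m + 5 = (m + 4) + 1 from rfl, coeff_X_mul_pow, coeff_X_add_one_pow,
      Nat.choose_self, Nat.choose_eq_zero_of_lt (by omega)]
    norm_num
  have hB1 : B.coeff (m + 4) = 2 ^ (m + 4) + (m + 4) := by
    rw [hBdef, coeff_add, coeff_two_X_add_one_pow,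
      show m + 4 = (m + 3) + 1 from rfl, coeff_X_mul_pow, coeff_X_add_one_pow,
      show m + 3 + 1 = m + 4 from rfl, Nat.choose_self, Nat.choose_succ_self_right]
    push_cast; ring
  have hB2 : B.coeff (m + 3) = (m + 4) * 2 ^ (m + 3) + ((m + 4).choose 2 : ℤ) := by
    rw [hBdef, coeff_add, coeff_two_X_add_one_pow,
      show m + 3 = (m + 2) + 1 from rfl, coeff_X_mul_pow, coeff_X_add_one_pow,
      show m + 2 + 1 = m + 3 from rfl, Nat.choose_succ_self_right,
      show m + 2 = (m + 4) - 2 by omega, Nat.choose_symm (by omega)]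
    push_cast; ring
  -- coefficients of C
  have hC0 : Cp.coeff 4 = 1 := by
    rw [hCdef, coeff_add, coeff_two_X_add_one_pow,
      show (4:ℕ) = 3 + 1 from rfl, coeff_X_mul_pow, coeff_X_add_one_pow]
    norm_num
  have hC1 : Cp.coeff 3 = 11 := by
    rw [hCdef, coeff_add, coeff_two_X_add_one_pow,
      show (3:ℕ) = 2 + 1 from rfl, coeff_X_mul_pow, coeff_X_add_one_pow]
    norm_num
  have hC2 : Cp.coeff 2 = 15 := by
    rw [hCdef, coeff_add, coeff_two_X_add_one_pow,
      show (2:ℕ) = 1 + 1 from rfl, coeff_X_mul_pow, coeff_X_add_one_pow]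
    norm_num
  -- coefficients of T
  have hT0 : T.coeff (2 * m + 15) = 0 := by
    rw [hTdef, show 2 * m + 15 = (2 * m + 14) + 1 from rfl, coeff_X_mul_pow,
      coeff_two_X_add_one_pow, Nat.choose_eq_zero_of_lt (by omega)]
    norm_num
  have hT1 : T.coeff (2 * m + 14) = 0 := by
    rw [hTdef, show 2 * m + 14 = (2 * m + 13) + 1 from rfl, coeff_X_mul_pow,
      coeff_two_X_add_one_pow, Nat.choose_eq_zero_of_lt (by omega)]
    norm_num
  have hT2 : T.coeff (2 * m + 13) = 2 ^ (2 * m + 12) := by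
    rw [hTdef, show 2 * m + 13 = (2 * m + 12) + 1 from rfl, coeff_X_mul_pow,
      coeff_two_X_add_one_pow, show 2 * (m + 4) + 4 = 2 * m + 12 by ring,
      Nat.choose_self]
    push_cast; ring
  -- coefficients of A*B
  have hAB0 : (A * B).coeff (2 * m + 11) = 1 := by
    have := mc0 A B hdA hdB
    rw [show m + 6 + (m + 5) = 2 * m + 11 by omega] at this
    rw [this, hA0, hB0]; ring
  have hAB1 : (A * B).coeff (2 * m + 10) = 3 * 2 ^ (m + 4) + 2 * m + 9 := by
    have := mcS1 A B (a := m + 5) (b := m + 4) hdA hdB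
    rw [show m + 5 + (m + 4) + 1 = 2 * m + 10 by omega] at this
    rw [this, hA0, hA1, hB0, hB1]
    push_cast; ring
  have hAB2 : (A * B).coeff (2 * m + 9) =
      2 ^ (2 * m + 9) + 2 ^ (m + 3) * (9 * (m + 4) + 4) + 2 * (m+4) ^ 2 + (m + 4) := by
    have := mcS2 A B (a := m + 4) (b := m + 3) hdA hdB
    rw [show m + 4 + (m + 3) + 2 = 2 * m + 9 by omega] at this
    rw [this, hA0, hA1, hA2, hB0, hB1, hB2]
    have h1 : 2 * (((m + 5).choose 2 : ℕ) : ℤ) = ((m:ℤ) + 5) * ((m:ℤ) + 4) := by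
      have := choose_two' (m + 4)
      rw [show m + 4 + 1 = m + 5 by omega] at this
      push_cast at this ⊢; linarith
    have h2 : 2 * (((m + 4).choose 2 : ℕ) : ℤ) = ((m:ℤ) + 4) * ((m:ℤ) + 3) := by
      have := choose_two' (m + 3)
      rw [show m + 3 + 1 = m + 4 by omega] at this
      push_cast at this ⊢; linarith
    push_cast
    have e1 : (2:ℤ) ^ (m + 5) = 2 ^ (m + 3) * 4 := by ring
    have e2 : (2:ℤ) ^ (m + 4) = 2 ^ (m + 3) * 2 := by ring
    have e3 : (2:ℤ) ^ (2 * m + 9) = 2 ^ (m + 4) * 2 ^ (m + 5) := by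
      rw [← pow_add]; norm_num; ring_nf
    have h3 : (2:ℤ) * ((((m + 5).choose 2 : ℕ) : ℤ) + (((m + 4).choose 2 : ℕ) : ℤ)) =
        2 * (((m:ℤ) + 4) ^ 2) := by linear_combination h1 + h2
    have hsum := mul_left_cancel₀ (two_ne_zero) h3
    linear_combination hsum + (((m:ℤ) + 4) * e2) + e3 + (2 ^ (m + 4) + (m:ℤ) + 4) * e1
  -- coefficients of P
  have hP0 : P.coeff (2 * m + 15) = 1 := by
    have := mc0 (A * B) Cp hdAB hdC
    rw [show 2 * m + 11 + 4 = 2 * m + 15 by omega] at this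
    rw [hP, coeff_add, this, hAB0, hC0, hT0]; ring
  have hP1 : P.coeff (2 * m + 14) = 3 * 2 ^ (m + 4) + 2 * m + 20 := by
    have := mcS1 (A * B) Cp (a := 2 * m + 10) (b := 3) hdAB hdC
    rw [show 2 * m + 10 + 3 + 1 = 2 * m + 14 by omega] at this
    rw [hP, coeff_add, this, hAB0, hAB1, hC0, hC1, hT1]; ring
  have hP2 : P.coeff (2 * m + 13) =
      2 * (m+4) ^ 2 + 23 * (m+4) + 9 * 2 ^ (2 * (m+4) + 1) + 2 ^ (m + 3) * (9 * (m+4) + 70) + 26 := by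
    have := mcS2 (A * B) Cp (a := 2 * m + 9) (b := 2) hdAB hdC
    rw [show 2 * m + 9 + 2 + 2 = 2 * m + 13 by omega] at this
    rw [hP, coeff_add, this, hAB0, hAB1, hAB2, hC0, hC1, hC2, hT2]
    have e3 : (2:ℤ) ^ (2 * (m + 4) + 1) = 2 ^ (2 * m + 9) := by ring_nf
    have e4 : (2:ℤ) ^ (2 * m + 12) = 2 ^ (2 * m + 9) * 8 := by ring
    have e2 : (2:ℤ) ^ (m + 4) = 2 ^ (m + 3) * 2 := by ring
    rw [e3, e4, e2]; ring
  refine ⟨?_, ?_, ?_, ?_⟩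
  · refine le_antisymm ?_ ?_
    · have h1 : (A * B * Cp).natDegree ≤ 2 * m + 15 :=
        natDegree_mul_le.trans (by omega)
      have h2 : T.natDegree ≤ 2 * m + 13 := by
        rw [hTdef]; compute_degree <;> omega
      rw [hP, show 2 * (m + 4) + 7 = 2 * m + 15 by ring]
      exact (natDegree_add_le _ _).trans (by omega)
    · rw [show 2 * (m + 4) + 7 = 2 * m + 15 by ring]
      exact le_natDegree_of_ne_zero (by rw [hP0]; norm_num)
  · rw [show 2 * (m + 4) + 7 = 2 * m + 15 by ring, hP0]
  · rw [show 2 * (m + 4) + 6 = 2 * m + 14 by ring, hP1]; push_cast; ring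
  · rw [show 2 * (m + 4) + 5 = 2 * m + 13 by ring, hP2,
      show m + 4 - 1 = m + 3 by omega]
    push_cast; ring
end

section
/- For every integer k ≥ 4, the polynomial ((2x+1)^{k+2} + x(x+1)^{k+2})·((2x+1)^k + x(x+1)^k)·((2x+1)^3 + x(x+1)^3) + x·(2x+1)^{2k+5} has degree 2k+8, leading coefficient 1, coefficient of x^{2k+7} equal to 5·2^k + 2k + 13, and the square of the coefficient of x^{2k+7} is strictly less than the coefficient of x^{2k+6}. -/
open Polynomial

lemma refl_two_X_one : reflect 1 (2*X+1 : ℤ[X]) = X + 2 := by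
  have h : (2*X+1 : ℤ[X]) = C 2 * X^1 + C 1 * X^0 := by simp [C_1]
  rw [h, reflect_add, reflect_C_mul_X_pow, reflect_C_mul_X_pow]
  simp [revAt_le]
  ring

lemma refl_pow (n : ℕ) : reflect n ((2*X+1 : ℤ[X])^n) = (X+2)^n := by
  induction n with
  | zero => simp
  | succ m ih =>
    have h1 : ((2*X+1 : ℤ[X])).natDegree ≤ 1 := by compute_degree
    have h2 : ((2*X+1 : ℤ[X])^m).natDegree ≤ m := by compute_degree
    rw [pow_succ, mul_comm, show (m+1) = 1 + m by ring,
      reflect_mul _ _ h1 h2, refl_two_X_one, ih]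
    ring

lemma refl_pow' (n : ℕ) : reflect n ((X+1 : ℤ[X])^n) = (X+1)^n := by
  induction n with
  | zero => simp
  | succ m ih =>
    have h1 : ((X+1 : ℤ[X])).natDegree ≤ 1 := by compute_degree
    have h2 : ((X+1 : ℤ[X])^m).natDegree ≤ m := by compute_degree
    have hx : reflect 1 (X+1 : ℤ[X]) = X + 1 := by
      have h : (X+1 : ℤ[X]) = C 1 * X^1 + C 1 * X^0 := by simp
      rw [h, reflect_add, reflect_C_mul_X_pow, reflect_C_mul_X_pow]
      simp [revAt_le]
      ring
    rw [pow_succ, mul_comm, show (m+1) = 1 + m by ring,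
      reflect_mul _ _ h1 h2, hx, ih]

lemma coeff_mul_one' (p q : ℤ[X]) :
    (p*q).coeff 1 = p.coeff 0 * q.coeff 1 + p.coeff 1 * q.coeff 0 := by
  rw [coeff_mul]
  rw [show (1:ℕ) = 0 + 1 by rfl, Finset.Nat.antidiagonal_succ, Finset.sum_cons, Finset.sum_map]
  simp

lemma coeff_mul_two' (p q : ℤ[X]) :
    (p*q).coeff 2 = p.coeff 0 * q.coeff 2 + p.coeff 1 * q.coeff 1 + p.coeff 2 * q.coeff 0 := by
  rw [coeff_mul]
  rw [show (2:ℕ) = 0 + 1 + 1 by rfl, Finset.Nat.antidiagonal_succ]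
  rw [Finset.sum_cons, Finset.sum_map, Finset.Nat.antidiagonal_succ, Finset.sum_cons,
    Finset.sum_map]
  simp
  ring

lemma coeff_X2 (n j : ℕ) : ((X+2:ℤ[X])^n).coeff j = 2^(n-j) * n.choose j := by
  rw [show (X+2:ℤ[X]) = X + C 2 by simp, coeff_X_add_C_pow]

lemma reflA (n : ℕ) :
    reflect (n+1) ((2*X+1:ℤ[X])^n + X*(X+1)^n) = X*(X+2)^n + (X+1)^n := by
  have h1 : ((2*X+1:ℤ[X])^n).natDegree ≤ n := by compute_degree
  have h2 : ((X+1:ℤ[X])^n).natDegree ≤ n := by compute_degree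
  have hX : (X:ℤ[X]).natDegree ≤ 1 := natDegree_X_le
  have e1 : reflect (n+1) ((2*X+1:ℤ[X])^n) = X*(X+2)^n := by
    rw [show ((2*X+1:ℤ[X])^n) = 1 * (2*X+1)^n by ring, show n+1 = 1+n by ring,
      reflect_mul _ _ (by simp) h1, reflect_one, refl_pow, pow_one]
  have e2 : reflect (n+1) (X*(X+1:ℤ[X])^n) = (X+1)^n := by
    rw [show n+1 = 1+n by ring, reflect_mul _ _ hX h2, reflect_one_X, refl_pow', one_mul]
  rw [reflect_add, e1, e2]

lemma ch2 (n : ℕ) : ((n+1).choose 2 : ℤ) * 2 = (n+1) * n := by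
  induction n with
  | zero => rfl
  | succ m ih =>
    rw [show m+1+1 = (m+1)+1 by rfl, Nat.choose_succ_succ (m+1) 1]
    push_cast
    push_cast at ih
    rw [Nat.choose_one_right]
    push_cast
    linarith

theorem stmt_17 (k : ℕ) (hk : 4 ≤ k) :
    let P : Polynomial ℤ :=
      ((2 * X + 1) ^ (k + 2) + X * (X + 1) ^ (k + 2)) *
        ((2 * X + 1) ^ k + X * (X + 1) ^ k) *
        ((2 * X + 1) ^ 3 + X * (X + 1) ^ 3) + X * (2 * X + 1) ^ (2 * k + 5)
    P.natDegree = 2 * k + 8 ∧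
    P.coeff (2 * k + 8) = 1 ∧
    P.coeff (2 * k + 7) = 5 * 2 ^ k + 2 * k + 13 ∧
    P.coeff (2 * k + 7) ^ 2 < P.coeff (2 * k + 6) := by
  intro P
  -- reflect decomposition
  have hA : (((2*X+1:ℤ[X])^(k+2) + X*(X+1)^(k+2))).natDegree ≤ k+3 := by
    compute_degree <;> omega
  have hB : (((2*X+1:ℤ[X])^k + X*(X+1)^k)).natDegree ≤ k+1 := by
    compute_degree <;> omega
  have hC : (((2*X+1:ℤ[X])^3 + X*(X+1)^3)).natDegree ≤ 4 := by compute_degree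
  have hAB : ((((2*X+1:ℤ[X])^(k+2) + X*(X+1)^(k+2))) *
      (((2*X+1)^k + X*(X+1)^k))).natDegree ≤ 2*k+4 :=
    le_trans (natDegree_mul_le) (by omega)
  have hpow : ((2*X+1:ℤ[X])^(2*k+5)).natDegree ≤ 2*k+5 := by compute_degree
  have hX3 : (X:ℤ[X]).natDegree ≤ 3 := by simp [natDegree_X]
  have hrX : reflect 3 (X:ℤ[X]) = X^2 := by
    rw [← pow_one (X:ℤ[X]), reflect_monomial]; norm_num [revAt_le]
  have hQ : reflect (2*k+8) P
      = (X*(X+2)^(k+2) + (X+1)^(k+2)) * (X*(X+2)^k + (X+1)^k) * (X*(X+2)^3 + (X+1)^3)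
        + X^2 * (X+2)^(2*k+5) := by
    show reflect (2*k+8) (((2 * X + 1) ^ (k + 2) + X * (X + 1) ^ (k + 2)) *
        ((2 * X + 1) ^ k + X * (X + 1) ^ k) *
        ((2 * X + 1) ^ 3 + X * (X + 1) ^ 3) + X * (2 * X + 1) ^ (2 * k + 5) : ℤ[X]) = _
    rw [reflect_add, show 2*k+8 = (2*k+4)+4 by ring, reflect_mul _ _ hAB hC,
      show 2*k+4 = (k+3)+(k+1) by ring, reflect_mul _ _ hA hB,
      show (k+3)+(k+1)+4 = 3+(2*k+5) by ring, reflect_mul _ _ hX3 hpow,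
      refl_pow, hrX, show (k+3) = (k+2)+1 by ring,
      reflA, reflA, show (4:ℕ) = 3+1 by rfl, reflA]
  -- coefficients of P from reflected polynomial
  have hcoeff : ∀ j : ℕ, j ≤ 2*k+8 → P.coeff (2*k+8-j) = (reflect (2*k+8) P).coeff j := by
    intro j hj
    rw [coeff_reflect, revAt_le hj]
  have hdegle : P.natDegree ≤ 2*k+8 := by
    refine le_trans (natDegree_add_le _ _) ?_
    refine max_le (le_trans natDegree_mul_le ?_) (le_trans natDegree_mul_le ?_)
    · omega
    · have := natDegree_X (R := ℤ)
      omega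
  obtain ⟨m, rfl⟩ := Nat.exists_eq_add_of_le hk
  set u : ℤ := 2^m with hu
  have hc0 : P.coeff (2*(4+m)+8) = 1 := by
    rw [show 2*(4+m)+8 = 2*(4+m)+8-0 by omega, hcoeff 0 (by omega), hQ]
    simp [mul_coeff_zero, coeff_X2, coeff_X_add_one_pow]
  have hc1 : P.coeff (2*(4+m)+7) = 80*u + 2*m + 21 := by
    rw [show 2*(4+m)+7 = 2*(4+m)+8-1 by omega, hcoeff 1 (by omega), hQ]
    simp [coeff_mul_one', mul_coeff_zero, coeff_X2, coeff_X_add_one_pow, coeff_X_pow]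
    rw [hu, show (2:ℤ)^(4+m) = 16*2^m by rw [pow_add]; norm_num,
      show (2:ℤ)^(4+m+2) = 64*2^m by rw [pow_add, pow_add]; ring]
    push_cast
    ring
  set ca : ℤ := ((m+6).choose 2 : ℤ) with hca
  set cb : ℤ := ((m+4).choose 2 : ℤ) with hcb
  have hc2 : P.coeff (2*(4+m)+6) =
      15 + 11*((64*u+m+6) + (16*u+m+4))
        + ((32*u*(m+6)+ca) + (64*u+m+6)*(16*u+m+4) + (8*u*(m+4)+cb)) + 8192*u^2 := by
    rw [show 2*(4+m)+6 = 2*(4+m)+8-2 by omega, hcoeff 2 (by omega), hQ]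
    simp [coeff_mul_two', coeff_mul_one', mul_coeff_zero, coeff_X2, coeff_X_add_one_pow,
      coeff_X_pow]
    simp only [show (4+m:ℕ) = m+4 from by ring, show (m+4+2:ℕ) = m+6 from by ring,
      show (m+4+1:ℕ) = m+5 from by ring]
    rw [hca, hcb, hu,
      show (2:ℤ)^(m+4) = 2^m*16 by rw [pow_add]; norm_num,
      show (2:ℤ)^(m+5) = 2^m*32 by rw [pow_add]; norm_num,
      show (2:ℤ)^(m+6) = 2^m*64 by rw [pow_add]; norm_num,
      show (2:ℤ)^(3+m) = 8*2^m by rw [pow_add]; norm_num,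
      show (2:ℤ)^(2*(m+4)+5) = (2^m)^2*8192 by
        rw [show 2*(m+4)+5 = m+m+13 by ring, pow_add, pow_add]; ring]
    push_cast
    ring
  refine ⟨?_, ?_, ?_, ?_⟩
  · exact natDegree_eq_of_le_of_coeff_ne_zero hdegle (by rw [hc0]; norm_num)
  · exact hc0
  · rw [hc1, hu]; push_cast
    rw [show (2:ℤ)^(4+m) = 16*2^m by rw [pow_add]; ring]
    ring
  · rw [hc1, hc2]
    have h2ca : ca * 2 = (m+6)*(m+5) := by
      rw [hca, show m+6 = (m+5)+1 by ring]
      have := ch2 (m+5)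
      push_cast at this ⊢
      linarith
    have h2cb : cb * 2 = (m+4)*(m+3) := by
      rw [hcb, show m+4 = (m+3)+1 by ring]
      have := ch2 (m+3)
      push_cast at this ⊢
      linarith
    have hu1 : (1:ℤ) ≤ u := by rw [hu]; exact one_le_pow₀ (by norm_num)
    have hum : (m:ℤ) + 1 ≤ u := by
      rw [hu]
      exact_mod_cast Nat.lt_two_pow_self (n := m)
    nlinarith [mul_le_mul hum hum (by positivity) (le_trans (by positivity) hum),
      sq_nonneg ((m:ℤ)+1), mul_pos (lt_of_lt_of_le one_pos hu1) (lt_of_lt_of_le one_pos hu1)]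
end

section
/- Each real root of the equation (3·2^x + 2x + 12)^2 = 2x^2 + 23x + 9·2^{2x+1} + 2^{x-1}(9x + 70) + 26 is strictly less than 4, and for every real x ≥ 4 the left-hand side is strictly smaller than the right-hand side. -/
lemma aux_lin (x : ℝ) (hx : 4 ≤ x) : 11 * x - 28 ≤ (2:ℝ) ^ x := by
  have h1 : (2:ℝ) ^ x = 16 * (2:ℝ) ^ (x - 4) := by
    rw [show x = 4 + (x - 4) by ring, Real.rpow_add two_pos]
    norm_num
  have h2 : (2:ℝ) ^ (x - 4) = Real.exp ((x - 4) * Real.log 2) := by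
    rw [Real.rpow_def_of_pos two_pos, mul_comm]
  have h3 : (x - 4) * Real.log 2 + 1 ≤ Real.exp ((x - 4) * Real.log 2) :=
    Real.add_one_le_exp _
  have hlog : (0.6875 : ℝ) ≤ Real.log 2 := by
    linarith [Real.log_two_gt_d9]
  nlinarith [mul_le_mul_of_nonneg_left hlog (by linarith : (0:ℝ) ≤ x - 4)]

lemma aux_ineq (x : ℝ) (hx : 4 ≤ x) :
    (3 * (2 : ℝ) ^ x + 2 * x + 12) ^ 2 <
      2 * x ^ 2 + 23 * x + 9 * (2 : ℝ) ^ (2 * x + 1)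
        + (2 : ℝ) ^ (x - 1) * (9 * x + 70) + 26 := by
  have h2x : (2:ℝ) ^ (2 * x + 1) = 2 * ((2:ℝ) ^ x) ^ 2 := by
    rw [Real.rpow_add two_pos, Real.rpow_one, two_mul, Real.rpow_add two_pos, sq]
    ring
  have hxm1 : (2:ℝ) ^ (x - 1) = (2:ℝ) ^ x / 2 := by
    rw [Real.rpow_sub two_pos, Real.rpow_one]
  rw [h2x, hxm1]
  set t : ℝ := (2:ℝ) ^ x with ht
  have ht16 : (16:ℝ) ≤ t := by
    calc (16:ℝ) = (2:ℝ) ^ (4:ℝ) := by norm_num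
    _ ≤ t := Real.rpow_le_rpow_left_iff one_lt_two |>.mpr hx
  have htlin : 11 * x - 28 ≤ t := aux_lin x hx
  nlinarith [sq_nonneg (t - 16), sq_nonneg (x - 4), mul_nonneg (by linarith : (0:ℝ) ≤ t - 16) (by linarith : (0:ℝ) ≤ x - 4), mul_le_mul_of_nonneg_left htlin (by linarith : (0:ℝ) ≤ t)]

theorem stmt_19 :
    (∀ x : ℝ,
        (3 * (2 : ℝ) ^ x + 2 * x + 12) ^ 2 =
          2 * x ^ 2 + 23 * x + 9 * (2 : ℝ) ^ (2 * x + 1)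
            + (2 : ℝ) ^ (x - 1) * (9 * x + 70) + 26 →
        x < 4) ∧
    ∀ x : ℝ, 4 ≤ x →
      (3 * (2 : ℝ) ^ x + 2 * x + 12) ^ 2 <
        2 * x ^ 2 + 23 * x + 9 * (2 : ℝ) ^ (2 * x + 1)
          + (2 : ℝ) ^ (x - 1) * (9 * x + 70) + 26 := by
  refine ⟨fun x hx => ?_, fun x hx => aux_ineq x hx⟩
  by_contra h
  push_neg at h
  exact absurd hx (ne_of_lt (aux_ineq x h))
end
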